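/- Let g be a doubling weight function and let λ : ℤ → ℝ satisfy λ_{−j} = λ_j and ∑_{j∈ℤ} λ_j² < ∞. Then for every harmonic function u on the unit disk with Fourier coefficients (a_j) satisfying |u(z)| ≤ K·g(1/(1−|z|)) on the disk, the series ∑_{j∈ℤ} λ_j a_j r^{|j|} e^{ijθ} converges on the unit disk and defines a harmonic function v with |v(z)| ≤ K'·g(1/(1−|z|)) on the disk for some constant K'. -/

import Mathlib

/-- A doubling weight function with doubling constant `D`: a positive, increasing,
continuous function on `[1,∞)` with `g(1) = 1`, `g(x) → ∞`, and `g(2x) ≤ D·g(x)`. -/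
def IsDoublingWeight (g : ℝ → ℝ) (D : ℝ) : Prop :=
  ContinuousOn g (Set.Ici 1) ∧ MonotoneOn g (Set.Ici 1) ∧
  (∀ x : ℝ, 1 ≤ x → 0 < g x) ∧ g 1 = 1 ∧
  Filter.Tendsto g Filter.atTop Filter.atTop ∧
  (∀ x : ℝ, 1 ≤ x → g (2 * x) ≤ D * g x)

/-- `u` is the harmonic function on the unit disk whose Fourier coefficients are `a`,
i.e. `u(r e^{iθ}) = ∑_{j ∈ ℤ} a_j r^{|j|} e^{ijθ}` with `a_{-j} = conj (a_j)`. -/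
def HasFourierExpansion (u : ℂ → ℝ) (a : ℤ → ℂ) : Prop :=
  (∀ j : ℤ, a (-j) = starRingEnd ℂ (a j)) ∧
  ∀ r θ : ℝ, 0 ≤ r → r < 1 →
    HasSum (fun j : ℤ => a j * (r : ℂ) ^ j.natAbs * Complex.exp (Complex.I * (j : ℂ) * (θ : ℂ)))
      ((u ((r : ℂ) * Complex.exp (Complex.I * (θ : ℂ))) : ℂ))

/-!
On the circle `|z| = r` the numbers `c_j = a_j r^|j|` are the Fourier coefficients of the
continuous function `θ ↦ u(r e^{iθ})`, so Bessel's inequality bounds `‖c‖_{ℓ²}` by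
`sup_θ |u(r e^{iθ})| ≤ K g(1/(1-r))`. By Cauchy–Schwarz, `∑ |λ_j c_j| ≤ ‖λ‖_{ℓ²} ‖c‖_{ℓ²}`, so the
multiplied series converges absolutely on that circle and is bounded by `‖λ‖_{ℓ²} K g(1/(1-r))`;
its sum is real because `λ` is symmetric.
-/

open MeasureTheory Complex ComplexConjugate

theorem summable_mul_and_tsum_mul_le_sqrt_mul_sqrt {ι : Type*} {f g : ι → ℝ}
    (hf : ∀ i, 0 ≤ f i) (hg : ∀ i, 0 ≤ g i)
    (hf2 : Summable fun i => f i ^ 2) (hg2 : Summable fun i => g i ^ 2) :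
    (Summable fun i => f i * g i) ∧
      ∑' i, f i * g i ≤ √(∑' i, f i ^ 2) * √(∑' i, g i ^ 2) := by
  simpa [Real.sqrt_eq_rpow] using
    Real.summable_and_inner_le_Lp_mul_Lq_tsum_of_nonneg .two_two hf hg
      (by simpa using hf2) (by simpa using hg2)

theorem Orthonormal.inner_eq_of_hasSum {𝕜 E ι : Type*} [RCLike 𝕜] [NormedAddCommGroup E]
    [InnerProductSpace 𝕜 E] {v : ι → E} (hv : Orthonormal 𝕜 v) {c : ι → 𝕜} {x : E}
    (hx : HasSum (fun i => c i • v i) x) (i : ι) : inner 𝕜 (v i) x = c i := by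
  classical
  have hterm (j : ι) : inner 𝕜 (v i) (c j • v j) = if j = i then c i else 0 := by
    rw [inner_smul_right, orthonormal_iff_ite.mp hv]
    split_ifs <;> simp_all
  have h := (innerSL 𝕜 (v i)).hasSum hx
  simp only [innerSL_apply_apply, hterm] at h
  exact h.unique (hasSum_ite_eq i (c i))

theorem ContinuousMap.norm_toLp_le_of_isProbabilityMeasure {α E : Type*} [TopologicalSpace α]
    [CompactSpace α] [MeasurableSpace α] [BorelSpace α] [NormedAddCommGroup E]
    [SecondCountableTopologyEither α E] (μ : Measure α) [IsProbabilityMeasure μ]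
    {p : ENNReal} [Fact (1 ≤ p)] (𝕜 : Type*) [NontriviallyNormedField 𝕜] [NormedSpace 𝕜 E]
    (F : C(α, E)) : ‖toLp (E := E) p μ 𝕜 F‖ ≤ ‖F‖ := by
  have h : ‖(toLp p μ 𝕜 : C(α, E) →L[𝕜] Lp E p μ)‖ ≤ 1 := by
    have := toLp_norm_le (E := E) (p := p) μ (𝕜 := 𝕜)
    rwa [measureUnivNNReal, measure_univ, ENNReal.toNNReal_one, NNReal.coe_one,
      Real.one_rpow] at this
  calc ‖toLp (E := E) p μ 𝕜 F‖ ≤ ‖(toLp p μ 𝕜 : C(α, E) →L[𝕜] Lp E p μ)‖ * ‖F‖ :=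
        (toLp p μ 𝕜).le_opNorm F
    _ ≤ ‖F‖ := mul_le_of_le_one_left (norm_nonneg F) h

theorem AddCircle.summable_sq_norm_and_sqrt_tsum_le_of_hasSum_fourier {T : ℝ} [Fact (0 < T)]
    {c : ℤ → ℂ} {F : C(AddCircle T, ℂ)} (hF : HasSum (fun j => c j • fourier j) F) :
    (Summable fun j => ‖c j‖ ^ 2) ∧ √(∑' j, ‖c j‖ ^ 2) ≤ ‖F‖ := by
  set x := ContinuousMap.toLp (E := ℂ) 2 haarAddCircle ℂ F
  have hx : HasSum (fun j => c j • fourierLp 2 j) x := by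
    simpa only [map_smul] using (ContinuousMap.toLp (E := ℂ) 2 haarAddCircle ℂ).hasSum hF
  have hcoeff (j : ℤ) : ‖inner ℂ (fourierLp 2 j) x‖ = ‖c j‖ := by
    rw [orthonormal_fourier.inner_eq_of_hasSum hx]
  refine ⟨by simpa only [hcoeff] using orthonormal_fourier.inner_products_summable x,
    Real.sqrt_le_iff.mpr ⟨norm_nonneg F, ?_⟩⟩
  calc ∑' j, ‖c j‖ ^ 2 = ∑' j, ‖inner ℂ (fourierLp 2 j) x‖ ^ 2 := by simp only [hcoeff]
    _ ≤ ‖x‖ ^ 2 := orthonormal_fourier.tsum_inner_products_le x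
    _ ≤ ‖F‖ ^ 2 := by
      gcongr
      exact ContinuousMap.norm_toLp_le_of_isProbabilityMeasure _ ℂ F

theorem summable_sq_norm_and_sqrt_tsum_le_of_norm_tsum_exp_le {c : ℤ → ℂ}
    (hc : Summable fun j => ‖c j‖) {B : ℝ}
    (hB : ∀ θ : ℝ, ‖∑' j, c j * exp (I * j * θ)‖ ≤ B) :
    (Summable fun j => ‖c j‖ ^ 2) ∧ √(∑' j, ‖c j‖ ^ 2) ≤ B := by
  have : Fact (0 < 2 * Real.pi) := ⟨Real.two_pi_pos⟩
  have hexp (j : ℤ) (θ : ℝ) : fourier j (θ : AddCircle (2 * Real.pi)) = exp (I * j * θ) := by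
    rw [fourier_coe_apply]
    congr 1
    field_simp
    push_cast
    ring
  have hsum : Summable fun j => c j • fourier (T := 2 * Real.pi) j :=
    .of_norm (by simpa only [norm_smul, fourier_norm, mul_one] using hc)
  obtain ⟨hsq, hle⟩ := AddCircle.summable_sq_norm_and_sqrt_tsum_le_of_hasSum_fourier hsum.hasSum
  refine ⟨hsq, hle.trans ((ContinuousMap.norm_le _ ((norm_nonneg _).trans (hB 0))).2 fun x => ?_)⟩
  induction x using QuotientAddGroup.induction_on with
  | H θ =>
    simpa only [← ContinuousMap.tsum_apply hsum, ContinuousMap.smul_apply, smul_eq_mul, hexp]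
      using hB θ

theorem summable_smul_of_summable_sq_of_summable_norm {ι E : Type*} [NormedAddCommGroup E]
    [NormedSpace ℝ E] [CompleteSpace E] {lam : ι → ℝ} (hlam : Summable fun i => lam i ^ 2)
    {f : ι → E} (hf : Summable fun i => ‖f i‖) : Summable fun i => lam i • f i := by
  refine .of_norm_bounded_eventually hf ?_
  filter_upwards [hlam.tendsto_cofinite_zero.eventually (Iic_mem_nhds one_pos)] with i hi
  rw [norm_smul, Real.norm_eq_abs]
  exact mul_le_of_le_one_left (norm_nonneg _) ((sq_le_one_iff_abs_le_one _).mp hi)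

theorem ofReal_re_tsum_of_conj_neg {t : ℤ → ℂ} (ht : ∀ j, conj (t (-j)) = t j) :
    ((∑' j, t j).re : ℂ) = ∑' j, t j := by
  refine conj_eq_iff_re.mp ?_
  rw [conj_tsum, ← (Equiv.neg ℤ).tsum_eq]
  simp only [Equiv.neg_apply, ht]

/-- Written with `z` and `conj z` rather than `‖z‖` and `arg z`, so that `harmonicSeries` needs no
polar coordinates. -/
def harmonicMonomial (j : ℤ) (z : ℂ) : ℂ :=
  if 0 ≤ j then z ^ j.natAbs else conj z ^ j.natAbs

theorem harmonicMonomial_ofReal_mul_exp (j : ℤ) (r θ : ℝ) :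
    harmonicMonomial j (r * exp (I * θ)) = r ^ j.natAbs * exp (I * j * θ) := by
  unfold harmonicMonomial
  split_ifs with hj
  · have hj' : (j.natAbs : ℂ) = j := by rw [Nat.cast_natAbs, abs_of_nonneg hj]
    rw [mul_pow, ← exp_nat_mul, hj']
    congr 2
    ring
  · have hj' : (j.natAbs : ℂ) = -j := by
      rw [Nat.cast_natAbs, abs_of_neg (not_le.mp hj), Int.cast_neg]
    rw [map_mul, conj_ofReal, ← exp_conj, mul_pow, ← exp_nat_mul, hj']
    simp only [map_mul, conj_I, conj_ofReal]
    congr 2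
    ring

noncomputable def harmonicSeries (b : ℤ → ℂ) (z : ℂ) : ℝ :=
  (∑' j, b j * harmonicMonomial j z).re

theorem hasFourierExpansion_harmonicSeries {b : ℤ → ℂ} (hb : ∀ j, b (-j) = conj (b j))
    (hsum : ∀ r θ : ℝ, 0 ≤ r → r < 1 →
      Summable fun j : ℤ => b j * r ^ j.natAbs * exp (I * j * θ)) :
    HasFourierExpansion (harmonicSeries b) b := by
  refine ⟨hb, fun r θ hr hr1 => ?_⟩
  have hterm (j : ℤ) : conj (b (-j) * r ^ (-j).natAbs * exp (I * (-j : ℤ) * θ)) =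
      b j * r ^ j.natAbs * exp (I * j * θ) := by
    simp only [hb, map_mul, map_pow, conj_conj, conj_ofReal, Int.natAbs_neg, ← exp_conj, conj_I,
      Int.cast_neg, map_neg, map_intCast]
    congr 2
    ring
  simp only [harmonicSeries, harmonicMonomial_ofReal_mul_exp, ← mul_assoc]
  rw [ofReal_re_tsum_of_conj_neg hterm]
  exact (hsum r θ hr hr1).hasSum

theorem HasFourierExpansion.harmonicSeries_mul {u : ℂ → ℝ} {a : ℤ → ℂ}
    (hu : HasFourierExpansion u a) {lam : ℤ → ℝ} (hsym : ∀ j, lam (-j) = lam j)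
    (hl2 : Summable fun j => lam j ^ 2) :
    HasFourierExpansion (harmonicSeries fun j => lam j * a j) fun j => lam j * a j := by
  refine hasFourierExpansion_harmonicSeries (fun j => by simp [hsym, hu.1]) fun r θ hr hr1 => ?_
  simpa only [real_smul, mul_assoc] using summable_smul_of_summable_sq_of_summable_norm hl2
    (summable_norm_iff.mpr (hu.2 r θ hr hr1).summable)

theorem HasFourierExpansion.abs_harmonicSeries_mul_le {u : ℂ → ℝ} {a : ℤ → ℂ}
    (hu : HasFourierExpansion u a) {lam : ℤ → ℝ} (hl2 : Summable fun j => lam j ^ 2)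
    {r : ℝ} (hr : 0 ≤ r) (hr1 : r < 1) {B : ℝ} (hB : ∀ θ : ℝ, |u (r * exp (I * θ))| ≤ B)
    (θ : ℝ) :
    |harmonicSeries (fun j => lam j * a j) (r * exp (I * θ))| ≤ √(∑' j, lam j ^ 2) * B := by
  set c : ℤ → ℂ := fun j => a j * r ^ j.natAbs
  have hc : Summable fun j => ‖c j‖ := by
    simpa [c] using summable_norm_iff.mpr (hu.2 r 0 hr hr1).summable
  have hcB (θ : ℝ) : ‖∑' j, c j * exp (I * j * θ)‖ ≤ B := by
    simp only [c]
    rw [(hu.2 r θ hr hr1).tsum_eq, norm_real, Real.norm_eq_abs]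
    exact hB θ
  obtain ⟨hc2, hcB2⟩ := summable_sq_norm_and_sqrt_tsum_le_of_norm_tsum_exp_le hc hcB
  obtain ⟨hsum, hCS⟩ := summable_mul_and_tsum_mul_le_sqrt_mul_sqrt
    (fun j => abs_nonneg (lam j)) (fun j => norm_nonneg (c j)) (by simpa using hl2) hc2
  have hnorm (j : ℤ) :
      ‖lam j * a j * harmonicMonomial j (r * exp (I * θ))‖ = |lam j| * ‖c j‖ := by
    have hexp : ‖exp (I * j * θ)‖ = 1 := by
      rw [mul_assoc, ← ofReal_intCast, ← ofReal_mul, norm_exp_I_mul_ofReal]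
    simp only [harmonicMonomial_ofReal_mul_exp, c, norm_mul, norm_real, Real.norm_eq_abs,
      norm_pow, hexp, mul_one]
    ring
  calc |harmonicSeries (fun j => lam j * a j) (r * exp (I * θ))|
      ≤ ‖∑' j, lam j * a j * harmonicMonomial j (r * exp (I * θ))‖ := abs_re_le_norm _
    _ ≤ ∑' j, ‖lam j * a j * harmonicMonomial j (r * exp (I * θ))‖ :=
      norm_tsum_le_tsum_norm (by simpa only [hnorm] using hsum)
    _ = ∑' j, |lam j| * ‖c j‖ := by simp only [hnorm]
    _ ≤ √(∑' j, |lam j| ^ 2) * √(∑' j, ‖c j‖ ^ 2) := hCS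
    _ ≤ √(∑' j, lam j ^ 2) * B := by
      simp only [sq_abs]
      gcongr

theorem l2_multiplier_general (g : ℝ → ℝ) (lam : ℤ → ℝ) (hsym : ∀ j : ℤ, lam (-j) = lam j)
    (hl2 : Summable fun j : ℤ => (lam j) ^ 2) :
    ∀ (u : ℂ → ℝ) (a : ℤ → ℂ) (K : ℝ), HasFourierExpansion u a →
      (∀ z : ℂ, ‖z‖ < 1 → |u z| ≤ K * g (1 / (1 - ‖z‖))) →
      ∃ (v : ℂ → ℝ) (K' : ℝ), HasFourierExpansion v (fun j => (lam j : ℂ) * a j) ∧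
        ∀ z : ℂ, ‖z‖ < 1 → |v z| ≤ K' * g (1 / (1 - ‖z‖)) := by
  intro u a K hu hbound
  refine ⟨harmonicSeries fun j => lam j * a j, √(∑' j, lam j ^ 2) * K,
    hu.harmonicSeries_mul hsym hl2, fun z hz => ?_⟩
  have hpolar : (‖z‖ : ℂ) * exp (I * z.arg) = z := by
    rw [mul_comm I]
    exact norm_mul_exp_arg_mul_I z
  have hnorm (θ : ℝ) : ‖(‖z‖ : ℂ) * exp (I * θ)‖ = ‖z‖ := by
    simp [norm_exp_I_mul_ofReal]
  have h := hu.abs_harmonicSeries_mul_le hl2 (norm_nonneg z) hz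
    (fun θ => by simpa only [hnorm] using hbound _ ((hnorm θ).trans_lt hz)) z.arg
  rwa [hpolar, ← mul_assoc] at h

/-- Every symmetric `ℓ²` sequence is a coefficient multiplier of the
growth space `h_g^∞` into itself. -/
theorem l2_multiplier (g : ℝ → ℝ) (D : ℝ) (hg : IsDoublingWeight g D)
    (lam : ℤ → ℝ) (hsym : ∀ j : ℤ, lam (-j) = lam j)
    (hl2 : Summable fun j : ℤ => (lam j) ^ 2) :
    ∀ (u : ℂ → ℝ) (a : ℤ → ℂ) (K : ℝ), HasFourierExpansion u a →
      (∀ z : ℂ, ‖z‖ < 1 → |u z| ≤ K * g (1 / (1 - ‖z‖))) →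
      ∃ (v : ℂ → ℝ) (K' : ℝ), HasFourierExpansion v (fun j => (lam j : ℂ) * a j) ∧
        ∀ z : ℂ, ‖z‖ < 1 → |v z| ≤ K' * g (1 / (1 - ‖z‖)) :=
  l2_multiplier_general g lam hsym hl2
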